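/- arXiv:1807.02252 — 5 statements merged into one kernel-verified Lean document; each statement's English description precedes it below -/
import Mathlib

section
/- μ_p(F_{r+1}^t \ F_r^t) = C(t+2r, r+1) p^{t+r+1} q^{r+1} and μ_p(F_r^t \ F_{r+1}^t) = C(t+2r, r) p^{t+r} q^{r+2}. -/
open Finset

noncomputable def mu (n : ℕ) (p : ℝ) (𝒜 : Finset (Finset (Fin n))) : ℝ :=
  ∑ A ∈ 𝒜, p ^ A.card * (1 - p) ^ (n - A.card)

def Fam (n t r : ℕ) : Finset (Finset (Fin n)) :=
  Finset.univ.filter (fun F => t + r ≤ (F.filter (fun i => i.val < t + 2 * r)).card)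

/-!
Both differences are determined by the trace `F ∩ W'` of `F` on the window
`W' = [t + 2r + 2]`, and the `p`-biased measure of `{F | F ∩ W' ∈ 𝒮}` is
`∑ S ∈ 𝒮, p ^ |S| q ^ (|W'| - |S|)`, since the coordinates outside `W'` sum out to
`(p + q) ^ (n - |W'|) = 1`. With `W = [t + 2r]`, a trace `S` of a set in `F_r \ F_{r+1}`
is exactly a `(t + r)`-subset of `W`, while a trace of a set in `F_{r+1} \ F_r` has
`t + r + 1` elements and exactly `t + r - 1` of them in `W`, so `W' \ S` is an
`(r + 1)`-subset of `W`.
-/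

variable {α : Type*} [DecidableEq α]

section Trace

variable [Fintype α]

theorem sum_filter_inter_eq (p : ℝ) {W S : Finset α} (hS : S ⊆ W) :
    ∑ F ∈ univ.filter (fun F => F ∩ W = S), p ^ #F * (1 - p) ^ (Fintype.card α - #F)
      = p ^ #S * (1 - p) ^ (#W - #S) := by
  have hcard : #W + #Wᶜ = Fintype.card α := card_add_card_compl W
  calc _ = ∑ T ∈ Wᶜ.powerset, p ^ #(S ∪ T) * (1 - p) ^ (Fintype.card α - #(S ∪ T)) := by
        refine sum_nbij' (· \ W) (S ∪ ·) ?_ ?_ ?_ ?_ ?_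
        · intro F _
          simp [sdiff_eq_inter_compl]
        · intro T hT
          rw [mem_filter, union_inter_distrib_right, inter_eq_left.mpr hS,
            disjoint_iff_inter_eq_empty.mp (subset_compl_iff_disjoint_right.mp
              (mem_powerset.mp hT)), union_empty]
          exact ⟨mem_univ _, rfl⟩
        · intro F hF
          rw [← (mem_filter.mp hF).2, union_comm, sdiff_union_inter]
        · intro T hT
          rw [union_sdiff_distrib, sdiff_eq_empty_iff_subset.mpr hS, empty_union,
            sdiff_eq_self_of_disjoint (subset_compl_iff_disjoint_right.mp (mem_powerset.mp hT))]
        · intro F hF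
          rw [← (mem_filter.mp hF).2, union_comm, sdiff_union_inter]
    _ = ∑ T ∈ Wᶜ.powerset, p ^ #S * (1 - p) ^ (#W - #S) * (p ^ #T * (1 - p) ^ (#Wᶜ - #T)) := by
        refine sum_congr rfl fun T hT => ?_
        have hTW : T ⊆ Wᶜ := mem_powerset.mp hT
        have hST : Disjoint S T :=
          disjoint_of_subset_left hS (subset_compl_iff_disjoint_right.mp hTW).symm
        have := card_le_card hS
        have := card_le_card hTW
        rw [card_union_of_disjoint hST,
          show Fintype.card α - (#S + #T) = (#W - #S) + (#Wᶜ - #T) by omega]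
        ring
    _ = p ^ #S * (1 - p) ^ (#W - #S) := by
        rw [← mul_sum, sum_pow_mul_eq_add_pow, add_sub_cancel, one_pow, mul_one]

theorem sum_filter_inter_mem (p : ℝ) {W : Finset α} {𝒮 : Finset (Finset α)}
    (h𝒮 : 𝒮 ⊆ W.powerset) :
    ∑ F ∈ univ.filter (fun F => F ∩ W ∈ 𝒮), p ^ #F * (1 - p) ^ (Fintype.card α - #F)
      = ∑ S ∈ 𝒮, p ^ #S * (1 - p) ^ (#W - #S) := by
  rw [← sum_fiberwise_of_maps_to (g := (· ∩ W)) (t := 𝒮) fun F hF => (mem_filter.mp hF).2]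
  refine sum_congr rfl fun S hS => ?_
  rw [filter_filter, ← sum_filter_inter_eq p (mem_powerset.mp (h𝒮 hS))]
  refine sum_congr (filter_congr fun F _ => ?_) fun _ _ => rfl
  exact ⟨And.right, fun h => ⟨h ▸ hS, h⟩⟩

end Trace

section Windows

variable {W W' : Finset α}

theorem powerset_filter_eq_powersetCard (hW : W ⊆ W') (k : ℕ) :
    W'.powerset.filter (fun S => k ≤ #(S ∩ W) ∧ #S < k + 1) = W.powersetCard k := by
  ext S
  simp only [mem_filter, mem_powerset, mem_powersetCard]
  constructor
  · rintro ⟨-, hk, hS⟩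
    have hSW : S ∩ W = S := eq_of_subset_of_card_le inter_subset_left (by omega)
    exact ⟨inter_eq_left.mp hSW, by rw [← hSW] at hS ⊢; omega⟩
  · rintro ⟨hSW, rfl⟩
    rw [inter_eq_left.mpr hSW]
    exact ⟨hSW.trans hW, le_rfl, Nat.lt_succ_self _⟩

theorem card_sdiff_inter_of_subset (hW : W ⊆ W') (S : Finset α) :
    #((W' \ S) ∩ W) = #W - #(S ∩ W) := by
  rw [sdiff_inter_right_comm, inter_eq_right.mpr hW, card_sdiff, inter_comm]

theorem sum_powerset_filter_eq_sum_powersetCard_sdiff {β : Type*} [AddCommMonoid β]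
    (f : Finset α → β) (hW : W ⊆ W') (hcard : #W' = #W + 2) {j k : ℕ} (hjk : j + k = #W + 1) :
    ∑ S ∈ W'.powerset.filter (fun S => k + 1 ≤ #S ∧ #(S ∩ W) < k), f S
      = ∑ T ∈ W.powersetCard j, f (W' \ T) := by
  rw [← powerset_filter_eq_powersetCard hW]
  refine sum_nbij' (W' \ ·) (W' \ ·) ?_ ?_ ?_ ?_ ?_
  · intro S hS
    simp only [mem_filter, mem_powerset] at hS ⊢
    rw [card_sdiff_inter_of_subset hW, card_sdiff_of_subset hS.1]
    exact ⟨sdiff_subset, by omega, by omega⟩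
  · intro T hT
    simp only [mem_filter, mem_powerset] at hT ⊢
    rw [card_sdiff_inter_of_subset hW, card_sdiff_of_subset hT.1]
    have := card_le_card (inter_subset_right (s₁ := T) (s₂ := W))
    have := card_le_card hT.1
    exact ⟨sdiff_subset, by omega, by omega⟩
  · exact fun S hS => Finset.sdiff_sdiff_eq_self (mem_powerset.mp (mem_filter.mp hS).1)
  · exact fun T hT => Finset.sdiff_sdiff_eq_self (mem_powerset.mp (mem_filter.mp hT).1)
  · intro S hS
    rw [Finset.sdiff_sdiff_eq_self (mem_powerset.mp (mem_filter.mp hS).1)]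

variable [Fintype α]

theorem filter_le_card_inter_sdiff (hW : W ⊆ W') (a b : ℕ) :
    univ.filter (fun F => a ≤ #(F ∩ W')) \ univ.filter (fun F => b ≤ #(F ∩ W))
      = univ.filter (fun F => F ∩ W' ∈ W'.powerset.filter (fun S => a ≤ #S ∧ #(S ∩ W) < b)) := by
  ext F
  simp [inter_assoc, inter_eq_right.mpr hW]

theorem filter_le_card_inter_sdiff' (hW : W ⊆ W') (a b : ℕ) :
    univ.filter (fun F => b ≤ #(F ∩ W)) \ univ.filter (fun F => a ≤ #(F ∩ W'))
      = univ.filter (fun F => F ∩ W' ∈ W'.powerset.filter (fun S => b ≤ #(S ∩ W) ∧ #S < a)) := by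
  ext F
  simp [inter_assoc, inter_eq_right.mpr hW]

theorem sum_filter_le_card_inter_sdiff (p : ℝ) (hW : W ⊆ W')
    (hcard : #W' = #W + 2) {j k : ℕ} (hjk : j + k = #W + 1) :
    ∑ F ∈ univ.filter (fun F => k + 1 ≤ #(F ∩ W')) \ univ.filter (fun F => k ≤ #(F ∩ W)),
        p ^ #F * (1 - p) ^ (Fintype.card α - #F)
      = (#W).choose j * p ^ (k + 1) * (1 - p) ^ j := by
  rw [filter_le_card_inter_sdiff hW, sum_filter_inter_mem p (filter_subset _ _),
    sum_powerset_filter_eq_sum_powersetCard_sdiff _ hW hcard hjk]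
  have hterm : ∀ T ∈ W.powersetCard j,
      p ^ #(W' \ T) * (1 - p) ^ (#W' - #(W' \ T)) = p ^ (k + 1) * (1 - p) ^ j := by
    intro T hT
    rw [mem_powersetCard] at hT
    rw [card_sdiff_of_subset (hT.1.trans hW), hT.2, show #W' - j = k + 1 by omega,
      show #W' - (k + 1) = j by omega]
  rw [sum_congr rfl hterm, sum_const, card_powersetCard, nsmul_eq_mul, mul_assoc]

theorem sum_filter_le_card_inter_sdiff' (p : ℝ) (hW : W ⊆ W') (k : ℕ) :
    ∑ F ∈ univ.filter (fun F => k ≤ #(F ∩ W)) \ univ.filter (fun F => k + 1 ≤ #(F ∩ W')),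
        p ^ #F * (1 - p) ^ (Fintype.card α - #F)
      = (#W).choose k * p ^ k * (1 - p) ^ (#W' - k) := by
  rw [filter_le_card_inter_sdiff' hW, sum_filter_inter_mem p (filter_subset _ _),
    powerset_filter_eq_powersetCard hW,
    sum_congr rfl fun S hS => by rw [(mem_powersetCard.mp hS).2], sum_const, card_powersetCard,
    nsmul_eq_mul, mul_assoc]

end Windows

def window (n m : ℕ) : Finset (Fin n) := univ.filter (fun i => i.val < m)

theorem card_window {n m : ℕ} (h : m ≤ n) : #(window n m) = m := by
  rw [window, Fin.card_filter_val_lt, min_eq_right h]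

theorem window_mono {n m m' : ℕ} (h : m ≤ m') : window n m ⊆ window n m' :=
  fun i hi => by simp only [window, mem_filter, mem_univ, true_and] at hi ⊢; omega

theorem Fam_eq (n t r : ℕ) :
    Fam n t r = univ.filter (fun F => t + r ≤ #(F ∩ window n (t + 2 * r))) := by
  simp only [Fam, window, inter_filter, inter_univ]

theorem stmt2_general (n t r : ℕ) (hn : t + 2 * r + 2 ≤ n) (p : ℝ) :
    mu n p (Fam n t (r + 1) \ Fam n t r) =
        ((t + 2 * r).choose (r + 1) : ℝ) * p ^ (t + r + 1) * (1 - p) ^ (r + 1) ∧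
    mu n p (Fam n t r \ Fam n t (r + 1)) =
        ((t + 2 * r).choose r : ℝ) * p ^ (t + r) * (1 - p) ^ (r + 2) := by
  have hW : window n (t + 2 * r) ⊆ window n (t + 2 * (r + 1)) := window_mono (by omega)
  have hcardW : #(window n (t + 2 * r)) = t + 2 * r := card_window (by omega)
  have hcardW' : #(window n (t + 2 * (r + 1))) = t + 2 * (r + 1) := card_window hn
  constructor
  · have h := sum_filter_le_card_inter_sdiff p hW (by omega)
      (show r + 1 + (t + r) = _ + 1 by omega)
    rw [Fintype.card_fin, hcardW] at h
    rw [mu, Fam_eq, Fam_eq]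
    exact h
  · have h := sum_filter_le_card_inter_sdiff' p hW (t + r)
    rw [Fintype.card_fin, hcardW, hcardW', show t + 2 * (r + 1) - (t + r) = r + 2 by omega,
      Nat.choose_symm_of_eq_add (show t + 2 * r = t + r + r by ring)] at h
    rw [mu, Fam_eq, Fam_eq]
    exact h

theorem stmt2 (n t r : ℕ) (hn : t + 2 * r + 2 ≤ n) (p : ℝ) (hp0 : 0 < p) (hp1 : p < 1) :
    mu n p (Fam n t (r + 1) \ Fam n t r) =
        ((t + 2 * r).choose (r + 1) : ℝ) * p ^ (t + r + 1) * (1 - p) ^ (r + 1) ∧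
    mu n p (Fam n t r \ Fam n t (r + 1)) =
        ((t + 2 * r).choose r : ℝ) * p ^ (t + r) * (1 - p) ^ (r + 2) :=
  stmt2_general n t r hn p
end

section
/- μ_p(F_{r+1}^t) - μ_p(F_r^t) is positive, zero, or negative according as p - (r+1)/(t+2r+1) is positive, zero, or negative, respectively. -/
/-!
Both families depend only on the coordinates in `S = [t+2r+2]`, so their measures are sums over
subsets `B ⊆ S`, with weight `p^|B| q^(|S|-|B|)`. Writing `T = [t+2r]`, `m = t+2r`, `s = t+r`, the
difference of the two sums keeps only the sets `B` with `|B ∩ T| = s-1` containing both points of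
`S \ T` (in `F_{r+1}` only) and the `s`-subsets of `T` (in `F_r` only). Hence the difference is
`C(m,s-1) p^(s+1) q^(r+1) - C(m,s) p^s q^(r+2)`, and Pascal's rule `C(m,s) s = C(m,s-1) (r+1)`
turns this into a positive multiple of `p - (r+1)/(m+1)`.
-/

open Finset

section Marginal

variable {α : Type*} [Fintype α] [DecidableEq α]

theorem sum_filter_inter_eq_sum_powerset (p : ℝ) (S : Finset α) (P : Finset α → Prop)
    [DecidablePred P] :
    ∑ F with P (F ∩ S), p ^ #F * (1 - p) ^ (Fintype.card α - #F) =
      ∑ B ∈ S.powerset with P B, p ^ #B * (1 - p) ^ (#S - #B) := by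
  have hsplit : ∑ F with P (F ∩ S), p ^ #F * (1 - p) ^ (Fintype.card α - #F) =
      ∑ B ∈ S.powerset with P B, ∑ C ∈ Sᶜ.powerset,
        p ^ #B * (1 - p) ^ (#S - #B) * (p ^ #C * (1 - p) ^ (#Sᶜ - #C)) := by
    rw [← sum_product']
    refine sum_nbij' (fun F => (F ∩ S, F \ S)) (fun x => x.1 ∪ x.2) ?_ ?_ ?_ ?_ ?_
    · intro F hF
      simp only [mem_filter, mem_univ, true_and] at hF
      simp [hF, subset_iff]
    · rintro ⟨B, C⟩ h
      simp only [mem_product, mem_filter, mem_powerset] at h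
      have : (B ∪ C) ∩ S = B := by grind [mem_compl]
      simp [this, h.1.2]
    · intro F _
      rw [union_comm, sdiff_union_inter]
    · rintro ⟨B, C⟩ h
      simp only [mem_product, mem_filter, mem_powerset] at h
      ext <;> grind [mem_compl]
    · intro F _
      have hF := card_inter_add_card_sdiff F S
      have hS := card_add_card_compl S
      have h1 := card_le_card (inter_subset_right (s₁ := F) (s₂ := S))
      have h2 : #(F \ S) ≤ #Sᶜ := card_le_card (by intro x; simp)
      rw [← hF, show Fintype.card α - (#(F ∩ S) + #(F \ S)) =
        (#S - #(F ∩ S)) + (#Sᶜ - #(F \ S)) by omega]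
      ring
  simp_rw [hsplit, ← mul_sum, sum_pow_mul_eq_add_pow, add_sub_cancel, one_pow, mul_one]

end Marginal

section TwoExtraPoints

variable {α : Type*} [DecidableEq α] {S T : Finset α} {s : ℕ}

theorem filter_sdiff_filter_eq_powersetCard (hTS : T ⊆ S) :
    {B ∈ S.powerset | s ≤ #(B ∩ T)} \ {B ∈ S.powerset | s + 1 ≤ #B} = T.powersetCard s := by
  ext B
  simp only [mem_sdiff, mem_filter, mem_powerset, mem_powersetCard, not_and, not_le]
  constructor
  · rintro ⟨⟨hBS, hs⟩, hB⟩
    have hBT : B ∩ T = B :=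
      eq_of_subset_of_card_le inter_subset_left (by have := hB hBS; omega)
    rw [hBT] at hs
    exact ⟨inter_eq_left.mp hBT, by have := hB hBS; omega⟩
  · rintro ⟨hBT, rfl⟩
    refine ⟨⟨hBT.trans hTS, by rw [inter_eq_left.mpr hBT]⟩, fun _ => by omega⟩

theorem sdiff_eq_and_card_inter_of_card_ge (hST : #(S \ T) = 2) {B : Finset α} (hBS : B ⊆ S)
    (hB : s + 1 ≤ #B) (hBT : #(B ∩ T) < s) : B \ T = S \ T ∧ #(B ∩ T) + 1 = s := by
  have hsub : B \ T ⊆ S \ T := sdiff_subset_sdiff hBS le_rfl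
  have hsplit := card_inter_add_card_sdiff B T
  have := card_le_card hsub
  exact ⟨eq_of_subset_of_card_le hsub (by omega), by omega⟩

theorem union_sdiff_inter_of_subset {C : Finset α} (hCT : C ⊆ T) : (C ∪ S \ T) ∩ T = C := by
  rw [union_inter_distrib_right, inter_eq_left.mpr hCT, sdiff_inter_self, union_empty]

theorem filter_sdiff_filter_eq_image (hTS : T ⊆ S) (hST : #(S \ T) = 2) (hs : 1 ≤ s) :
    {B ∈ S.powerset | s + 1 ≤ #B} \ {B ∈ S.powerset | s ≤ #(B ∩ T)} =
      (T.powersetCard (s - 1)).image (· ∪ (S \ T)) := by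
  ext B
  simp only [mem_sdiff, mem_filter, mem_powerset, mem_image, mem_powersetCard, not_and, not_le]
  constructor
  · rintro ⟨⟨hBS, hB⟩, hBT⟩
    obtain ⟨hdiff, hcard⟩ := sdiff_eq_and_card_inter_of_card_ge hST hBS hB (hBT hBS)
    exact ⟨B ∩ T, ⟨inter_subset_right, by omega⟩, by rw [← hdiff, union_comm, sdiff_union_inter]⟩
  · rintro ⟨C, ⟨hCT, hC⟩, rfl⟩
    have hdisj : Disjoint C (S \ T) := disjoint_of_subset_left hCT disjoint_sdiff
    refine ⟨⟨union_subset (hCT.trans hTS) sdiff_subset, ?_⟩, fun _ => ?_⟩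
    · rw [card_union_of_disjoint hdisj]; omega
    · rw [union_sdiff_inter_of_subset hCT]; omega

theorem sum_filter_card_ge_sub_sum_filter_card_inter_ge (p : ℝ) (hTS : T ⊆ S)
    (hST : #(S \ T) = 2) (hs : 1 ≤ s) :
    ∑ B ∈ S.powerset with s + 1 ≤ #B, p ^ #B * (1 - p) ^ (#S - #B) -
        ∑ B ∈ S.powerset with s ≤ #(B ∩ T), p ^ #B * (1 - p) ^ (#S - #B) =
      (#T).choose (s - 1) * (p ^ (s + 1) * (1 - p) ^ (#S - (s + 1))) -
        (#T).choose s * (p ^ s * (1 - p) ^ (#S - s)) := by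
  have hinj : Set.InjOn (· ∪ S \ T) (T.powersetCard (s - 1)) := by
    intro C₁ h₁ C₂ h₂ h
    rw [mem_coe, mem_powersetCard] at h₁ h₂
    rw [← union_sdiff_inter_of_subset (S := S) h₁.1, ← union_sdiff_inter_of_subset (S := S) h₂.1]
    exact congrArg (· ∩ T) h
  rw [← sum_sdiff_sub_sum_sdiff, filter_sdiff_filter_eq_image hTS hST hs,
    filter_sdiff_filter_eq_powersetCard hTS, sum_image hinj]
  congr 1
  · rw [sum_congr rfl fun C hC => ?_, sum_const, card_powersetCard, nsmul_eq_mul]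
    rw [mem_powersetCard] at hC
    rw [card_union_of_disjoint (disjoint_of_subset_left hC.1 disjoint_sdiff), hST, hC.2,
      show s - 1 + 2 = s + 1 by omega]
  · rw [sum_congr rfl fun B hB => ?_, sum_const, card_powersetCard, nsmul_eq_mul]
    rw [(mem_powersetCard.mp hB).2]

end TwoExtraPoints

theorem mu_filter_inter {n : ℕ} (p : ℝ) {S T : Finset (Fin n)} (hTS : T ⊆ S)
    (Q : Finset (Fin n) → Prop) [DecidablePred Q] :
    mu n p {F | Q (F ∩ T)} = ∑ B ∈ S.powerset with Q (B ∩ T), p ^ #B * (1 - p) ^ (#S - #B) := by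
  have hT : ∀ F : Finset (Fin n), F ∩ T = F ∩ S ∩ T := fun F => by
    rw [inter_assoc, inter_eq_right.mpr hTS]
  have h := sum_filter_inter_eq_sum_powerset p S fun B => Q (B ∩ T)
  rw [Fintype.card_fin] at h
  rw [mu, filter_congr fun F _ => by rw [hT F], h]

theorem Fam_eq_filter_card_inter (n t r : ℕ) :
    Fam n t r =
      ({F | t + r ≤ #(F ∩ ({i | i < t + 2 * r} : Finset (Fin n)))} : Finset (Finset (Fin n))) :=
  filter_congr fun F _ => by rw [inter_filter, inter_univ]

theorem choose_mul_pow_sub_choose_mul_pow (t r : ℕ) (hs : 1 ≤ t + r) (p : ℝ) :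
    ((t + 2 * r).choose (t + r - 1) : ℝ) * (p ^ (t + r + 1) * (1 - p) ^ (r + 1)) -
        (t + 2 * r).choose (t + r) * (p ^ (t + r) * (1 - p) ^ (r + 2)) =
      (t + 2 * r).choose (t + r) * (t + 2 * r + 1) / (r + 1) * p ^ (t + r) * (1 - p) ^ (r + 1) *
        (p - (r + 1) / (t + 2 * r + 1)) := by
  have hpascal : ((t + 2 * r).choose (t + r) : ℝ) * (t + r) =
      (t + 2 * r).choose (t + r - 1) * (r + 1) := by
    have h := Nat.choose_succ_right_eq (t + 2 * r) (t + r - 1)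
    rw [show t + r - 1 + 1 = t + r by omega, show t + 2 * r - (t + r - 1) = r + 1 by omega] at h
    exact_mod_cast h
  field_simp
  linear_combination (-p ^ (t + r) * (1 - p) ^ (r + 1) * p) * hpascal

theorem mu_Fam_succ_sub_mu_Fam (n t r : ℕ) (hs : 1 ≤ t + r) (hn : t + 2 * r + 2 ≤ n) (p : ℝ) :
    mu n p (Fam n t (r + 1)) - mu n p (Fam n t r) =
      ((t + 2 * r).choose (t + r - 1) : ℝ) * (p ^ (t + r + 1) * (1 - p) ^ (r + 1)) -
        (t + 2 * r).choose (t + r) * (p ^ (t + r) * (1 - p) ^ (r + 2)) := by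
  rw [Fam_eq_filter_card_inter, Fam_eq_filter_card_inter]
  set T : Finset (Fin n) := {i | i < t + 2 * r}
  set S : Finset (Fin n) := {i | i < t + 2 * (r + 1)}
  have hTS : T ⊆ S := fun i => by simp [T, S]; omega
  have hT : #T = t + 2 * r := by simp only [T, Fin.card_filter_val_lt]; omega
  have hS : #S = t + 2 * r + 2 := by simp only [S, Fin.card_filter_val_lt]; omega
  have hST : #(S \ T) = 2 := by rw [card_sdiff_of_subset hTS, hS, hT]; omega
  have hsucc : ∑ B ∈ S.powerset with t + (r + 1) ≤ #(B ∩ S), p ^ #B * (1 - p) ^ (#S - #B) =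
      ∑ B ∈ S.powerset with t + r + 1 ≤ #B, p ^ #B * (1 - p) ^ (#S - #B) := by
    rw [filter_congr fun B hB => by rw [inter_eq_left.mpr (mem_powerset.mp hB), ← add_assoc]]
  rw [mu_filter_inter p le_rfl (t + (r + 1) ≤ #·), mu_filter_inter p hTS (t + r ≤ #·), hsucc,
    sum_filter_card_ge_sub_sum_filter_card_inter_ge p hTS hST hs, hT, hS,
    show t + 2 * r + 2 - (t + r + 1) = r + 1 by omega, show t + 2 * r + 2 - (t + r) = r + 2 by omega]

theorem stmt3 (n t r : ℕ) (ht : 1 ≤ t) (hn : t + 2 * r + 2 ≤ n)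
    (p : ℝ) (hp0 : 0 < p) (hp1 : p < 1) :
    (0 < mu n p (Fam n t (r + 1)) - mu n p (Fam n t r) ↔
        0 < p - (r + 1 : ℝ) / (t + 2 * r + 1)) ∧
    (mu n p (Fam n t (r + 1)) - mu n p (Fam n t r) = 0 ↔
        p - (r + 1 : ℝ) / (t + 2 * r + 1) = 0) ∧
    (mu n p (Fam n t (r + 1)) - mu n p (Fam n t r) < 0 ↔
        p - (r + 1 : ℝ) / (t + 2 * r + 1) < 0) := by
  have hs : 1 ≤ t + r := by omega
  rw [mu_Fam_succ_sub_mu_Fam n t r hs hn p, choose_mul_pow_sub_choose_mul_pow t r hs p]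
  have hK : 0 < ((t + 2 * r).choose (t + r) : ℝ) * (t + 2 * r + 1) / (r + 1) * p ^ (t + r) *
      (1 - p) ^ (r + 1) := by
    have : 0 < 1 - p := sub_pos.mpr hp1
    have : 0 < (t + 2 * r).choose (t + r) := Nat.choose_pos (by omega)
    positivity
  refine ⟨mul_pos_iff_of_pos_left hK, mul_eq_zero_iff_left hK.ne', ?_⟩
  rw [← neg_pos, ← mul_neg, mul_pos_iff_of_pos_left hK, neg_pos]
end

section
/- Let F^ℓ ⊆ 2^[n] be the family of subsets whose associated walk hits the line y = x + ℓ, i.e., F^ℓ = {F ⊆ [n] : |F ∩ [ℓ+2j]| ≥ ℓ+j for some j ≥ 0}. Then μ_p(F^ℓ) ≤ (p/(1-p))^ℓ for 0 < p < 1/2. -/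
open Finset

/-- The family `F^ℓ` of subsets of `[n]` whose walk hits the line `y = x + ℓ`.
(Any witness `j` necessarily satisfies `j ≤ n`, since `ℓ + j ≤ |F| ≤ n`.) -/
def FamLine (n ℓ : ℕ) : Finset (Finset (Fin n)) :=
  Finset.univ.filter (fun F => ∃ j ≤ n,
    ℓ + j ≤ (F.filter (fun i => i.val < ℓ + 2 * j)).card)

/-! Conditioning on whether `0 ∈ F` shifts the walk by one step: the remaining `n` coordinates
must then reach the line at height `ℓ - 1` (weight `p`) or `ℓ + 1` (weight `1 - p`). Hence
`f n ℓ := μ_p(F^ℓ)` satisfies `f (n + 1) (ℓ + 1) = p f n ℓ + (1 - p) f n (ℓ + 2)`, together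
with `f n 0 ≤ 1` and `f 0 (ℓ + 1) = 0`. Since `α ^ ℓ` solves the same recursion with equality
(`α = p + (1 - p) α²`), induction on `n` gives `f n ℓ ≤ α ^ ℓ`. -/

section

variable {n ℓ : ℕ}

lemma sum_finset_fin_succ {M : Type*} [AddCommMonoid M] (f : Finset (Fin (n + 1)) → M) :
    ∑ A, f A = ∑ B : Finset (Fin n), f (B.image Fin.succ)
      + ∑ B : Finset (Fin n), f (insert 0 (B.image Fin.succ)) := by
  have huniv : (univ : Finset (Fin (n + 1))) = insert 0 (univ.image Fin.succ) := by
    ext i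
    cases i using Fin.cases <;> simp
  have hinj : Set.InjOn (image (Fin.succ (n := n))) ↑(univ : Finset (Fin n)).powerset :=
    (image_injective (Fin.succ_injective n)).injOn
  rw [← powerset_univ, huniv, sum_powerset_insert (by simp), powerset_image, sum_image hinj,
    sum_image hinj, powerset_univ]

lemma card_filter_image_succ_lt (B : Finset (Fin n)) (m : ℕ) :
    #((B.image Fin.succ).filter (·.val < m + 1)) = #(B.filter (·.val < m)) := by
  rw [filter_image, card_image_of_injective _ (Fin.succ_injective n)]
  simp

lemma card_filter_insert_zero_image_succ_lt (B : Finset (Fin n)) (m : ℕ) :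
    #((insert 0 (B.image Fin.succ)).filter (·.val < m + 1)) = #(B.filter (·.val < m)) + 1 := by
  rw [filter_insert, if_pos (by simp), card_insert_of_notMem (by simp),
    card_filter_image_succ_lt]

lemma card_filter_val_lt_le (B : Finset (Fin n)) (m : ℕ) : #(B.filter (·.val < m)) ≤ m :=
  (card_le_card (filter_subset_filter _ (subset_univ B))).trans
    (Fin.card_filter_val_lt.trans_le (min_le_right n m))

lemma mem_famLine_iff {A : Finset (Fin n)} :
    A ∈ FamLine n ℓ ↔ ∃ j, ℓ + j ≤ #(A.filter (·.val < ℓ + 2 * j)) := by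
  simp only [FamLine, mem_filter, mem_univ, true_and]
  refine ⟨fun ⟨j, _, hj⟩ => ⟨j, hj⟩, fun ⟨j, hj⟩ => ⟨j, ?_, hj⟩⟩
  have := (hj.trans (card_filter_le _ _)).trans (card_le_univ A)
  simp only [Fintype.card_fin] at this
  omega

lemma insert_zero_image_succ_mem_famLine_iff (B : Finset (Fin n)) :
    insert 0 (B.image Fin.succ) ∈ FamLine (n + 1) (ℓ + 1) ↔ B ∈ FamLine n ℓ := by
  simp only [mem_famLine_iff]
  refine exists_congr fun j => ?_
  rw [show ℓ + 1 + 2 * j = ℓ + 2 * j + 1 by ring, card_filter_insert_zero_image_succ_lt]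
  omega

lemma image_succ_mem_famLine_iff (B : Finset (Fin n)) :
    B.image Fin.succ ∈ FamLine (n + 1) (ℓ + 1) ↔ B ∈ FamLine n (ℓ + 2) := by
  simp only [mem_famLine_iff]
  constructor
  · rintro ⟨_ | j, hj⟩
    · rw [card_filter_image_succ_lt] at hj
      have := card_filter_val_lt_le B ℓ
      omega
    · rw [show ℓ + 1 + 2 * (j + 1) = ℓ + 2 + 2 * j + 1 by ring,
        card_filter_image_succ_lt] at hj
      exact ⟨j, by omega⟩
  · rintro ⟨j, hj⟩
    refine ⟨j + 1, ?_⟩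
    rw [show ℓ + 1 + 2 * (j + 1) = ℓ + 2 + 2 * j + 1 by ring, card_filter_image_succ_lt]
    omega

lemma famLine_zero_succ : FamLine 0 (ℓ + 1) = ∅ := by
  ext A
  simp [mem_famLine_iff, Subsingleton.elim A ∅]

lemma mu_succ (p : ℝ) (𝒜 : Finset (Finset (Fin (n + 1)))) :
    mu (n + 1) p 𝒜 = p * mu n p {B | insert 0 (B.image Fin.succ) ∈ 𝒜}
      + (1 - p) * mu n p {B | B.image Fin.succ ∈ 𝒜} := by
  have hcard (B : Finset (Fin n)) : #(B.image Fin.succ) = #B :=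
    card_image_of_injective _ (Fin.succ_injective n)
  have hle (B : Finset (Fin n)) : #B ≤ n := by simpa using card_le_univ B
  simp only [mu, mul_sum, sum_filter]
  rw [← Fintype.sum_extend_by_zero, sum_finset_fin_succ, add_comm]
  congr 1 <;> refine sum_congr rfl fun B _ => ?_ <;> split_ifs <;>
    simp only [card_insert_of_notMem (by simp : (0 : Fin (n + 1)) ∉ B.image Fin.succ), hcard,
      mul_zero]
  · rw [Nat.add_sub_add_right]
    ring
  · rw [Nat.sub_add_comm (hle B)]
    ring

lemma mu_le_one {p : ℝ} (hp0 : 0 ≤ p) (hp1 : p ≤ 1) (𝒜 : Finset (Finset (Fin n))) :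
    mu n p 𝒜 ≤ 1 :=
  calc mu n p 𝒜 ≤ ∑ A : Finset (Fin n), p ^ #A * (1 - p) ^ (n - #A) :=
        sum_le_sum_of_subset_of_nonneg (subset_univ _) fun _ _ _ =>
          mul_nonneg (pow_nonneg hp0 _) (pow_nonneg (sub_nonneg.2 hp1) _)
    _ = 1 := by rw [Fin.sum_pow_mul_eq_add_pow]; simp

lemma odds_pow_succ_eq {p : ℝ} (hp : p ≠ 1) (ℓ : ℕ) :
    (p / (1 - p)) ^ (ℓ + 1) = p * (p / (1 - p)) ^ ℓ + (1 - p) * (p / (1 - p)) ^ (ℓ + 2) := by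
  have hα : (1 - p) * (p / (1 - p)) = p := mul_div_cancel₀ p (sub_ne_zero.2 hp.symm)
  linear_combination (-(p / (1 - p)) ^ ℓ * (p / (1 - p) - 1)) * hα

theorem mu_famLine_le {p : ℝ} (hp0 : 0 ≤ p) (hp1 : p < 1) (n ℓ : ℕ) :
    mu n p (FamLine n ℓ) ≤ (p / (1 - p)) ^ ℓ := by
  have hq : 0 ≤ 1 - p := by linarith
  induction n generalizing ℓ with
  | zero =>
    cases ℓ with
    | zero => simpa using mu_le_one hp0 hp1.le _
    | succ ℓ =>
      rw [famLine_zero_succ, mu, sum_empty]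
      exact pow_nonneg (div_nonneg hp0 hq) _
  | succ n ih =>
    cases ℓ with
    | zero => simpa using mu_le_one hp0 hp1.le _
    | succ ℓ =>
      have h_in : ({B | insert 0 (B.image Fin.succ) ∈ FamLine (n + 1) (ℓ + 1)} : Finset _) =
          FamLine n ℓ := by
        ext B
        simp only [mem_filter, mem_univ, true_and, insert_zero_image_succ_mem_famLine_iff]
      have h_out : ({B | B.image Fin.succ ∈ FamLine (n + 1) (ℓ + 1)} : Finset _) =
          FamLine n (ℓ + 2) := by
        ext B
        simp only [mem_filter, mem_univ, true_and, image_succ_mem_famLine_iff]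
      rw [mu_succ, h_in, h_out, odds_pow_succ_eq hp1.ne]
      exact add_le_add (mul_le_mul_of_nonneg_left (ih ℓ) hp0)
        (mul_le_mul_of_nonneg_left (ih (ℓ + 2)) hq)

end

theorem stmt7_general (n ℓ : ℕ) (p : ℝ) (hp0 : 0 < p) (hp : p < 1 / 2) :
    mu n p (FamLine n ℓ) ≤ (p / (1 - p)) ^ ℓ :=
  mu_famLine_le hp0.le (by linarith) n ℓ

theorem stmt7 (n ℓ : ℕ) (hℓ : 1 ≤ ℓ) (hn : ℓ ≤ n) (p : ℝ) (hp0 : 0 < p) (hp : p < 1 / 2) :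
    mu n p (FamLine n ℓ) ≤ (p / (1 - p)) ^ ℓ :=
  stmt7_general n ℓ p hp0 hp
end

section
/- Let F ⊆ 2^[n] be a shifted, inclusion maximal family. If F ∈ F and F → F' (F shifts to F'), then F' ∈ F. -/
/-!
`X → Y` implies the counting inequalities `#{x ∈ X | x ≤ t} ≤ #{y ∈ Y | y ≤ t}` for all `t`,
because the `i`-th smallest element of `Y` lies below the `i`-th smallest element of `X`.
Now let `A ∈ 𝓕` and `B ⊆ [n]` satisfy these inequalities. If `A ⊆ B`, maximality gives `B ∈ 𝓕`.
Otherwise the inequality at the least `a ∈ A \ B` yields some `b ∈ B \ A` with `b < a`; shifting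
`a` to `b` stays in `𝓕`, preserves the inequalities and shrinks `A \ B`, so we conclude by
induction on `#(A \ B)`.
-/

open Finset

def nthSmallest (A : Finset ℕ) (i : ℕ) : ℕ :=
  (A.sort (· ≤ ·)).getD (i - 1) 0

/-- `X` shifts to `Y` (`X → Y`): `|X| ≤ |Y|` and `(X)_i ≥ (Y)_i` for all `i ≤ |X|`. -/
def ShiftsTo (X Y : Finset ℕ) : Prop :=
  X.card ≤ Y.card ∧ ∀ i, 1 ≤ i → i ≤ X.card → nthSmallest Y i ≤ nthSmallest X i

/-- A family of subsets of `[n] = {1,…,n}` is shifted. -/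
def IsShifted (n : ℕ) (𝓕 : Finset (Finset ℕ)) : Prop :=
  ∀ A ∈ 𝓕, ∀ i j : ℕ, 1 ≤ i → i < j → j ≤ n → j ∈ A → i ∉ A →
    insert i (A.erase j) ∈ 𝓕

/-- A family of subsets of `[n]` is inclusion maximal. -/
def IsInclusionMaximal (n : ℕ) (𝓕 : Finset (Finset ℕ)) : Prop :=
  ∀ A A' : Finset ℕ, A ∈ 𝓕 → A ⊆ A' → A' ⊆ Finset.Icc 1 n → A' ∈ 𝓕

theorem nthSmallest_succ_eq_orderEmbOfFin (A : Finset ℕ) (i : Fin #A) :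
    nthSmallest A (i + 1) = A.orderEmbOfFin rfl i := by
  simp [nthSmallest, orderEmbOfFin_apply]

theorem card_filter_orderEmbOfFin {α : Type*} [LinearOrder α] (s : Finset α) (p : α → Prop)
    [DecidablePred p] : #{i | p (s.orderEmbOfFin rfl i)} = #{x ∈ s | p x} := by
  conv_rhs => rw [← map_orderEmbOfFin_univ s rfl, filter_map, card_map]
  rfl

theorem card_filter_le_card_filter_of_shiftsTo {X Y : Finset ℕ} (h : ShiftsTo X Y) (t : ℕ) :
    #{x ∈ X | x ≤ t} ≤ #{y ∈ Y | y ≤ t} := by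
  obtain ⟨hcard, hle⟩ := h
  have hle' (i : Fin #X) : Y.orderEmbOfFin rfl (Fin.castLE hcard i) ≤ X.orderEmbOfFin rfl i := by
    have := hle (i + 1) (by omega) (by omega)
    rwa [nthSmallest_succ_eq_orderEmbOfFin X i, ← Fin.val_castLE hcard i, nthSmallest_succ_eq_orderEmbOfFin Y] at this
  rw [← card_filter_orderEmbOfFin X, ← card_filter_orderEmbOfFin Y]
  refine card_le_card_of_injOn (Fin.castLE hcard) (fun i hi => ?_) (Fin.castLE_injective _).injOn
  simp only [coe_filter, mem_univ, true_and, Set.mem_ofPred_eq] at hi ⊢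
  exact (hle' i).trans hi

theorem exists_mem_notMem_lt_of_card_filter_le {A B : Finset ℕ} {a : ℕ} (ha : a ∈ A)
    (haB : a ∉ B) (hAB : #{x ∈ A | x ≤ a} ≤ #{x ∈ B | x ≤ a}) : ∃ b ∈ B, b ∉ A ∧ b < a := by
  by_contra! h
  have hB : {x ∈ B | x ≤ a} ⊆ {x ∈ A | x < a} := by
    intro x hx
    obtain ⟨hxB, hxa⟩ := mem_filter.1 hx
    have hxa' : x < a := lt_of_le_of_ne hxa (by rintro rfl; exact haB hxB)
    exact mem_filter.2 ⟨by_contra fun hxA => (h x hxB hxA).not_gt hxa', hxa'⟩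
  have hA : {x ∈ A | x < a} ⊂ {x ∈ A | x ≤ a} :=
    (ssubset_iff_of_subset (monotone_filter_right A fun _ _ => le_of_lt)).2
      ⟨a, mem_filter.2 ⟨ha, le_rfl⟩, fun h => (mem_filter.1 h).2.false⟩
  exact (card_le_card hB |>.trans_lt (card_lt_card hA)).not_ge hAB

theorem card_filter_insert_erase_le {A B : Finset ℕ} {a b : ℕ} (ha : a ∈ A) (hbA : b ∉ A)
    (hbB : b ∈ B) (hba : b < a) (hbelow : ∀ x ∈ A, x < a → x ∈ B)
    (hAB : ∀ t, #{x ∈ A | x ≤ t} ≤ #{x ∈ B | x ≤ t}) (t : ℕ) :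
    #{x ∈ insert b (A.erase a) | x ≤ t} ≤ #{x ∈ B | x ≤ t} := by
  rcases lt_or_ge t a with hta | hat
  · refine card_le_card fun x hx => ?_
    simp only [mem_filter, mem_insert, mem_erase] at hx ⊢
    obtain ⟨rfl | ⟨-, hxA⟩, hxt⟩ := hx
    · exact ⟨hbB, hxt⟩
    · exact ⟨hbelow x hxA (by omega), hxt⟩
  · calc #{x ∈ insert b (A.erase a) | x ≤ t}
        = #{x ∈ A | x ≤ t} := by
          rw [filter_insert, if_pos (by omega), filter_erase,
            card_insert_of_notMem (by simp [hbA]), card_erase_add_one (by simp [ha, hat])]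
      _ ≤ #{x ∈ B | x ≤ t} := hAB t

theorem mem_of_forall_card_filter_le {n : ℕ} {𝓕 : Finset (Finset ℕ)}
    (hsub : ∀ A ∈ 𝓕, A ⊆ Icc 1 n) (hshift : IsShifted n 𝓕)
    (hmax : IsInclusionMaximal n 𝓕) {A B : Finset ℕ} (hA : A ∈ 𝓕) (hB : B ⊆ Icc 1 n)
    (hAB : ∀ t, #{x ∈ A | x ≤ t} ≤ #{x ∈ B | x ≤ t}) : B ∈ 𝓕 := by
  by_cases hAB' : A ⊆ B
  · exact hmax A B hA hAB' hB
  obtain ⟨a, haAB, hamin⟩ := (A \ B).exists_min_image id (sdiff_nonempty.2 hAB')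
  obtain ⟨haA, haB⟩ := mem_sdiff.1 haAB
  have hbelow : ∀ x ∈ A, x < a → x ∈ B := fun x hxA hxa =>
    by_contra fun hxB => (hamin x (mem_sdiff.2 ⟨hxA, hxB⟩)).not_gt hxa
  obtain ⟨b, hbB, hbA, hba⟩ := exists_mem_notMem_lt_of_card_filter_le haA haB (hAB a)
  have hA' : insert b (A.erase a) ∈ 𝓕 :=
    hshift A hA b a (mem_Icc.1 (hB hbB)).1 hba (mem_Icc.1 (hsub A hA haA)).2 haA hbA
  exact mem_of_forall_card_filter_le hsub hshift hmax hA' hB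
    (card_filter_insert_erase_le haA hbA hbB hba hbelow hAB)
termination_by #(A \ B)
decreasing_by
  rw [insert_sdiff_of_mem _ hbB, erase_sdiff_comm]
  exact card_erase_lt_of_mem haAB

theorem stmt11 (n : ℕ) (𝓕 : Finset (Finset ℕ))
    (hsub : ∀ A ∈ 𝓕, A ⊆ Finset.Icc 1 n)
    (hshift : IsShifted n 𝓕) (hmax : IsInclusionMaximal n 𝓕)
    (F F' : Finset ℕ) (hF : F ∈ 𝓕) (hF' : F' ⊆ Finset.Icc 1 n)
    (hFF' : ShiftsTo F F') :
    F' ∈ 𝓕 :=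
  mem_of_forall_card_filter_le hsub hshift hmax hF hF'
    (card_filter_le_card_filter_of_shiftsTo hFF')
end

section
/- For integers r ≥ 1, t > r² − r − 1, and p with r/(t+2r−1) ≤ p ≤ (r+1)/(t+2r+1), one has p(1−p) < (r+1)(t+1)/((t+2r+1)(t+r+1)). -/
/-!
On `p ≤ 1/2` the function `p ↦ p (1 - p)` is increasing, so for `t ≥ 1` it suffices to evaluate it
at the upper endpoint `u = (r+1)/(t+2r+1) ≤ 1/2`. Clearing denominators, `u (1 - u)` is below the
bound exactly when `(t+r)(t+r+1) < (t+1)(t+2r+1)`, i.e. when `r² < t + r + 1`. For `t = 0` the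
hypothesis forces `r ≤ 1`, and then the bound `1/(2r+1)` exceeds `1/4 ≥ p (1 - p)`.
-/

lemma mul_one_sub_le_of_le_of_le_half {p u : ℝ} (hpu : p ≤ u) (hu : u ≤ 1 / 2) :
    p * (1 - p) ≤ u * (1 - u) := by
  nlinarith

lemma mul_one_sub_le_one_div_four (p : ℝ) : p * (1 - p) ≤ 1 / 4 := by
  nlinarith [sq_nonneg (p - 1 / 2)]

lemma mul_one_sub_div_lt_of_sq_lt {r t : ℝ} (hr : 0 ≤ r) (ht : 0 ≤ t) (hrt : r ^ 2 < t + r + 1) :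
    (r + 1) / (t + 2 * r + 1) * (1 - (r + 1) / (t + 2 * r + 1)) <
      (r + 1) * (t + 1) / ((t + 2 * r + 1) * (t + r + 1)) := by
  have hD : 0 < t + 2 * r + 1 := by linarith
  have hsub : 1 - (r + 1) / (t + 2 * r + 1) = (t + r) / (t + 2 * r + 1) := by
    field_simp; ring
  rw [hsub, div_mul_div_comm, div_lt_div_iff₀ (by positivity) (by positivity)]
  nlinarith [mul_pos (mul_pos hD (by linarith : 0 < r + 1)) (by linarith : 0 < t + r + 1 - r ^ 2)]

theorem stmt14_general (r t : ℕ) (ht : (t : ℝ) > r ^ 2 - r - 1) (p : ℝ)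
    (hpu : p ≤ (r + 1 : ℝ) / (t + 2 * r + 1)) :
    p * (1 - p) < (r + 1 : ℝ) * (t + 1) / ((t + 2 * r + 1) * (t + r + 1)) := by
  have hr : (0 : ℝ) ≤ r := r.cast_nonneg
  rcases Nat.eq_zero_or_pos t with rfl | htpos
  · have hr1 : (r : ℝ) ≤ 1 := by
      by_contra! h
      have h2 : (2 : ℝ) ≤ r := by exact_mod_cast (show 2 ≤ r by exact_mod_cast h)
      push_cast at ht
      nlinarith
    calc p * (1 - p) ≤ 1 / 4 := mul_one_sub_le_one_div_four p
      _ < _ := by rw [lt_div_iff₀ (by positivity)]; push_cast; nlinarith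
  · have ht1 : (1 : ℝ) ≤ t := by exact_mod_cast htpos
    have hu : (r + 1 : ℝ) / (t + 2 * r + 1) ≤ 1 / 2 := by
      rw [div_le_iff₀ (by positivity)]; linarith
    calc p * (1 - p) ≤ _ := mul_one_sub_le_of_le_of_le_half hpu hu
      _ < _ := mul_one_sub_div_lt_of_sq_lt hr (by linarith) (by linarith)

theorem stmt14 (r t : ℕ) (hr : 1 ≤ r) (ht : (t : ℝ) > r ^ 2 - r - 1) (p : ℝ)
    (hpl : (r : ℝ) / (t + 2 * r - 1) ≤ p) (hpu : p ≤ (r + 1 : ℝ) / (t + 2 * r + 1)) :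
    p * (1 - p) < (r + 1 : ℝ) * (t + 1) / ((t + 2 * r + 1) * (t + r + 1)) :=
  stmt14_general r t ht p hpu
end
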